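/- arXiv:1609.03149 — 2 statements merged into one kernel-verified Lean document; each statement's English description precedes it below -/
import Mathlib

section
/- If there exist diagonal matrices T_P ∈ ℝ^{p×p} and T_V ∈ ℝ^{v×v} such that the symmetric block matrix Υ(T_P,T_V) = [[T_P R_P + R_Pᵀ T_P, T_P L_m + L_mᵀ T_V, 0],[(T_P L_m + L_mᵀ T_V)ᵀ, T_V R_V + R_Vᵀ T_V, −T_V ū_V],[0, −(T_V ū_V)ᵀ, −2(𝟙ᵀ T_P P_P + 𝟙ᵀ T_V P_V)]] is positive definite, then the stationary equations 0 = −R_P v_P − L_m v_V + u_P, 0 = −L_mᵀ v_P − R_V v_V + u_V + ū_V with power constraints P_{P,j} = v_{P,j} u_{P,j}, P_{V,k} = v_{V,k} u_{V,k} admit no solution (v_P, v_V, u_P, u_V). -/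
open Matrix BigOperators

/-- Proposition 1: feasibility of the LMI implies non-existence of an equilibrium. -/
theorem no_equilibrium_of_LMI {p v : ℕ}
    (RP : Matrix (Fin p) (Fin p) ℝ) (RV : Matrix (Fin v) (Fin v) ℝ)
    (Lm : Matrix (Fin p) (Fin v) ℝ)
    (uBarV : Fin v → ℝ) (PP : Fin p → ℝ) (PV : Fin v → ℝ)
    (tP : Fin p → ℝ) (tV : Fin v → ℝ)
    (hPD : ∀ z : ((Fin p ⊕ Fin v) ⊕ Unit) → ℝ, z ≠ 0 →
      0 < z ⬝ᵥ (Matrix.fromBlocks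
          (Matrix.fromBlocks
            (Matrix.diagonal tP * RP + RP.transpose * Matrix.diagonal tP)
            (Matrix.diagonal tP * Lm + Lm * Matrix.diagonal tV)
            (Matrix.diagonal tP * Lm + Lm * Matrix.diagonal tV).transpose
            (Matrix.diagonal tV * RV + RV.transpose * Matrix.diagonal tV))
          (Matrix.of fun i (_ : Unit) =>
            Sum.elim (0 : Fin p → ℝ) (-(Matrix.diagonal tV).mulVec uBarV) i)
          (Matrix.of fun (_ : Unit) j =>
            Sum.elim (0 : Fin p → ℝ) (-(Matrix.diagonal tV).mulVec uBarV) j)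
          (Matrix.of fun (_ : Unit) (_ : Unit) =>
            -2 * ((fun _ => (1 : ℝ)) ⬝ᵥ (Matrix.diagonal tP).mulVec PP +
                  (fun _ => (1 : ℝ)) ⬝ᵥ (Matrix.diagonal tV).mulVec PV))).mulVec z) :
    ¬ ∃ (vP uP : Fin p → ℝ) (vV uV : Fin v → ℝ),
        ((0 : Fin p → ℝ) = -(RP.mulVec vP) - Lm.mulVec vV + uP) ∧
        ((0 : Fin v → ℝ) = -(Lm.transpose.mulVec vP) - RV.mulVec vV + uV + uBarV) ∧
        (∀ j, PP j = vP j * uP j) ∧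
        (∀ k, PV k = vV k * uV k) := by
  rintro ⟨vP, uP, vV, uV, h1, h2, hP, hV⟩
  have hu1 : ∀ j, uP j = (RP.mulVec vP) j + (Lm.mulVec vV) j := by
    intro j
    have := congrFun h1 j
    simp only [Pi.add_apply, Pi.sub_apply, Pi.neg_apply, Pi.zero_apply] at this
    linarith
  have hu2 : ∀ k, uV k = (Lm.transpose.mulVec vP) k + (RV.mulVec vV) k - uBarV k := by
    intro k
    have := congrFun h2 k
    simp only [Pi.add_apply, Pi.sub_apply, Pi.neg_apply, Pi.zero_apply] at this
    linarith
  set z : ((Fin p ⊕ Fin v) ⊕ Unit) → ℝ :=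
    Sum.elim (Sum.elim vP vV) (fun _ => (1 : ℝ)) with hzdef
  have hz : z ≠ 0 := by
    intro h
    have := congrFun h (Sum.inr ())
    simp [hzdef] at this
  have hlt := hPD z hz
  have hzero : z ⬝ᵥ (Matrix.fromBlocks
          (Matrix.fromBlocks
            (Matrix.diagonal tP * RP + RP.transpose * Matrix.diagonal tP)
            (Matrix.diagonal tP * Lm + Lm * Matrix.diagonal tV)
            (Matrix.diagonal tP * Lm + Lm * Matrix.diagonal tV).transpose
            (Matrix.diagonal tV * RV + RV.transpose * Matrix.diagonal tV))
          (Matrix.of fun i (_ : Unit) =>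
            Sum.elim (0 : Fin p → ℝ) (-(Matrix.diagonal tV).mulVec uBarV) i)
          (Matrix.of fun (_ : Unit) j =>
            Sum.elim (0 : Fin p → ℝ) (-(Matrix.diagonal tV).mulVec uBarV) j)
          (Matrix.of fun (_ : Unit) (_ : Unit) =>
            -2 * ((fun _ => (1 : ℝ)) ⬝ᵥ (Matrix.diagonal tP).mulVec PP +
                  (fun _ => (1 : ℝ)) ⬝ᵥ (Matrix.diagonal tV).mulVec PV))).mulVec z = 0 := by
    simp only [hzdef, Matrix.fromBlocks_mulVec, sumElim_dotProduct_sumElim,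
      Matrix.add_mulVec, dotProduct_add]
    simp only [Matrix.mulVec, dotProduct, Matrix.transpose_apply, Matrix.add_apply,
      Matrix.of_apply, Sum.elim_inl, Sum.elim_inr, Pi.neg_apply, Pi.zero_apply, Pi.add_apply,
      Matrix.diagonal_mul, Matrix.mul_diagonal, Matrix.diagonal_apply, Function.comp,
      Finset.univ_unique, Finset.sum_singleton, Fintype.sum_sum_type,
      mul_ite, mul_zero, Finset.sum_ite_eq, Finset.mem_univ, if_true, one_mul, mul_one,
      Finset.sum_const_zero, add_zero, zero_add, mul_comm]
    have e1 : ∑ x : Fin p, vP x * ∑ x_1 : Fin p, vP x_1 * (RP x x_1 * tP x)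
        = ∑ x : Fin p, tP x * vP x * (RP.mulVec vP) x := by
      refine Finset.sum_congr rfl fun x _ => ?_
      simp only [Matrix.mulVec, dotProduct, Finset.mul_sum]
      exact Finset.sum_congr rfl fun x1 _ => by ring
    have e2 : ∑ x : Fin p, vP x * ∑ x_1 : Fin p, vP x_1 * (RP x_1 x * tP x_1)
        = ∑ x : Fin p, tP x * vP x * (RP.mulVec vP) x := by
      calc ∑ x : Fin p, vP x * ∑ x_1 : Fin p, vP x_1 * (RP x_1 x * tP x_1)
          = ∑ x : Fin p, ∑ x_1 : Fin p, vP x * (vP x_1 * (RP x_1 x * tP x_1)) :=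
            Finset.sum_congr rfl fun x _ => Finset.mul_sum _ _ _
        _ = ∑ x_1 : Fin p, ∑ x : Fin p, vP x * (vP x_1 * (RP x_1 x * tP x_1)) :=
            Finset.sum_comm
        _ = ∑ x : Fin p, tP x * vP x * (RP.mulVec vP) x := by
            refine Finset.sum_congr rfl fun x1 _ => ?_
            simp only [Matrix.mulVec, dotProduct, Finset.mul_sum]
            exact Finset.sum_congr rfl fun x _ => by ring
    have e3 : ∑ x : Fin p, vP x * ∑ x_1 : Fin v, vV x_1 * (Lm x x_1 * tP x)
        = ∑ x : Fin p, tP x * vP x * (Lm.mulVec vV) x := by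
      refine Finset.sum_congr rfl fun x _ => ?_
      simp only [Matrix.mulVec, dotProduct, Finset.mul_sum]
      exact Finset.sum_congr rfl fun x1 _ => by ring
    have e4 : ∑ x : Fin p, vP x * ∑ x_1 : Fin v, vV x_1 * (Lm x x_1 * tV x_1)
        = ∑ x : Fin v, tV x * vV x * (Lm.transpose.mulVec vP) x := by
      calc ∑ x : Fin p, vP x * ∑ x_1 : Fin v, vV x_1 * (Lm x x_1 * tV x_1)
          = ∑ x : Fin p, ∑ x_1 : Fin v, vP x * (vV x_1 * (Lm x x_1 * tV x_1)) :=
            Finset.sum_congr rfl fun x _ => Finset.mul_sum _ _ _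
        _ = ∑ x_1 : Fin v, ∑ x : Fin p, vP x * (vV x_1 * (Lm x x_1 * tV x_1)) :=
            Finset.sum_comm
        _ = ∑ x : Fin v, tV x * vV x * (Lm.transpose.mulVec vP) x := by
            refine Finset.sum_congr rfl fun x1 _ => ?_
            simp only [Matrix.mulVec, dotProduct, Matrix.transpose_apply, Finset.mul_sum]
            exact Finset.sum_congr rfl fun x _ => by ring
    have e5 : ∑ x : Fin v, vV x * ∑ x_1 : Fin p, vP x_1 * (Lm x_1 x * tP x_1 + Lm x_1 x * tV x)
        = (∑ x : Fin p, tP x * vP x * (Lm.mulVec vV) x)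
          + ∑ x : Fin v, tV x * vV x * (Lm.transpose.mulVec vP) x := by
      have split : ∑ x : Fin v, vV x * ∑ x_1 : Fin p, vP x_1 * (Lm x_1 x * tP x_1 + Lm x_1 x * tV x)
          = (∑ x : Fin v, ∑ x_1 : Fin p, vV x * (vP x_1 * (Lm x_1 x * tP x_1)))
            + ∑ x : Fin v, ∑ x_1 : Fin p, vV x * (vP x_1 * (Lm x_1 x * tV x)) := by
        rw [← Finset.sum_add_distrib]
        refine Finset.sum_congr rfl fun x _ => ?_
        rw [← Finset.sum_add_distrib, Finset.mul_sum]
        exact Finset.sum_congr rfl fun x1 _ => by ring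
      rw [split]
      congr 1
      · calc ∑ x : Fin v, ∑ x_1 : Fin p, vV x * (vP x_1 * (Lm x_1 x * tP x_1))
            = ∑ x_1 : Fin p, ∑ x : Fin v, vV x * (vP x_1 * (Lm x_1 x * tP x_1)) :=
              Finset.sum_comm
          _ = ∑ x : Fin p, tP x * vP x * (Lm.mulVec vV) x := by
              refine Finset.sum_congr rfl fun x1 _ => ?_
              simp only [Matrix.mulVec, dotProduct, Finset.mul_sum]
              exact Finset.sum_congr rfl fun x _ => by ring
      · refine Finset.sum_congr rfl fun x _ => ?_
        simp only [Matrix.mulVec, dotProduct, Matrix.transpose_apply, Finset.mul_sum]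
        exact Finset.sum_congr rfl fun x1 _ => by ring
    have e6 : ∑ x : Fin v, vV x * ∑ x_1 : Fin v, vV x_1 * (RV x x_1 * tV x)
        = ∑ x : Fin v, tV x * vV x * (RV.mulVec vV) x := by
      refine Finset.sum_congr rfl fun x _ => ?_
      simp only [Matrix.mulVec, dotProduct, Finset.mul_sum]
      exact Finset.sum_congr rfl fun x1 _ => by ring
    have e7 : ∑ x : Fin v, vV x * ∑ x_1 : Fin v, vV x_1 * (RV x_1 x * tV x_1)
        = ∑ x : Fin v, tV x * vV x * (RV.mulVec vV) x := by
      calc ∑ x : Fin v, vV x * ∑ x_1 : Fin v, vV x_1 * (RV x_1 x * tV x_1)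
          = ∑ x : Fin v, ∑ x_1 : Fin v, vV x * (vV x_1 * (RV x_1 x * tV x_1)) :=
            Finset.sum_congr rfl fun x _ => Finset.mul_sum _ _ _
        _ = ∑ x_1 : Fin v, ∑ x : Fin v, vV x * (vV x_1 * (RV x_1 x * tV x_1)) :=
            Finset.sum_comm
        _ = ∑ x : Fin v, tV x * vV x * (RV.mulVec vV) x := by
            refine Finset.sum_congr rfl fun x1 _ => ?_
            simp only [Matrix.mulVec, dotProduct, Finset.mul_sum]
            exact Finset.sum_congr rfl fun x _ => by ring
    have e8 : ∑ x : Fin v, vV x * -(uBarV x * tV x)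
        = -∑ x : Fin v, tV x * vV x * uBarV x := by
      rw [← Finset.sum_neg_distrib]
      exact Finset.sum_congr rfl fun x _ => by ring
    have hPP : ∑ x : Fin p, PP x * tP x
        = (∑ x : Fin p, tP x * vP x * (RP.mulVec vP) x)
          + ∑ x : Fin p, tP x * vP x * (Lm.mulVec vV) x := by
      rw [← Finset.sum_add_distrib]
      refine Finset.sum_congr rfl fun x _ => ?_
      rw [hP x, hu1 x]; ring
    have hPV : ∑ x : Fin v, PV x * tV x
        = (∑ x : Fin v, tV x * vV x * (Lm.transpose.mulVec vP) x)
          + (∑ x : Fin v, tV x * vV x * (RV.mulVec vV) x)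
          - ∑ x : Fin v, tV x * vV x * uBarV x := by
      rw [← Finset.sum_add_distrib, ← Finset.sum_sub_distrib]
      refine Finset.sum_congr rfl fun x _ => ?_
      rw [hV x, hu2 x]; ring
    linarith [e1, e2, e3, e4, e5, e6, e7, e8, hPP, hPV]
  rw [hzero] at hlt
  exact lt_irrefl 0 hlt
end

section
/- Consider the linear ODE ẋ = J x on ℝⁿ where J = −D⁻¹M with D = bdiag(C_P, C_V, L_T) positive definite diagonal and M = [[G_P + G_P⋆, 0, B_P],[0, G_V + G_V⋆, B_V],[−B_Pᵀ, −B_Vᵀ, R_T]]. If G_P + G_P⋆ and G_V + G_V⋆ and R_T are diagonal with positive entries, then all eigenvalues of J have negative real part, and hence the origin is asymptotically stable. -/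
/-!
With `D = diagonal dD`, the relation `D J = -M` turns the hypotheses into the Lyapunov equation
`Jᵀ D + D J = -(M + Mᵀ) = -C` with `C` diagonal and positive: the coupling blocks of `M` are skew
and cancel. If `J z = μ z` with `z ≠ 0`, then `2 Re μ · z* D z = -z* C z`, and both quadratic forms
are positive, so `Re μ < 0`. Along a trajectory, `V(x) = xᵀ D x` satisfies `V' = -xᵀ C x ≤ -k V`
for some `k > 0`, so `V` and hence `x` decay exponentially by Grönwall's inequality.
-/

open Matrix Filter Topology ComplexOrder

theorem exists_pos_forall_mul_le {ι : Type*} [Finite ι] {d c : ι → ℝ} (hc : ∀ i, 0 < c i) :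
    ∃ k > 0, ∀ i, k * d i ≤ c i := by
  have h : ∀ i, ∀ᶠ k in 𝓝[>] (0 : ℝ), k * d i ≤ c i := fun i =>
    ((continuous_id.mul continuous_const).tendsto' 0 0 (zero_mul _)).mono_left
      nhdsWithin_le_nhds |>.eventually (eventually_le_nhds (hc i))
  exact ((Filter.eventually_all.2 h).and self_mem_nhdsWithin).exists.imp fun k hk => ⟨hk.2, hk.1⟩

theorem le_mul_exp_of_hasDerivAt_le_neg_mul {V V' : ℝ → ℝ} {k : ℝ}
    (hV : ∀ s, HasDerivAt V (V' s) s) (hV' : ∀ s, V' s ≤ -k * V s) {s : ℝ} (hs : 0 ≤ s) :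
    V s ≤ V 0 * Real.exp (-k * s) := by
  have := le_gronwallBound_of_liminf_deriv_right_le (f := V) (f' := V') (δ := V 0) (K := -k)
    (ε := 0) (a := 0) (b := s) (fun x _ => (hV x).continuousAt.continuousWithinAt)
    (fun x _ r hr => (hV x).hasDerivWithinAt.liminf_right_slope_le hr) le_rfl
    (fun x _ => by simpa using hV' x) s ⟨hs, le_rfl⟩
  simpa [gronwallBound_ε0] using this

namespace Matrix

variable {ι : Type*} [Fintype ι] [DecidableEq ι]

theorem fromBlocks_diagonal_neg_transpose_add_transpose {m n R : Type*} [DecidableEq m]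
    [DecidableEq n] [AddCommGroup R] (g : m → R) (r : n → R) (B : Matrix m n R) :
    fromBlocks (diagonal g) B (-Bᵀ) (diagonal r) + (fromBlocks (diagonal g) B (-Bᵀ) (diagonal r))ᵀ =
      diagonal (2 • (g ⊕ᵥ r)) := by
  rw [fromBlocks_transpose, fromBlocks_add, diagonal_transpose, diagonal_transpose, transpose_neg,
    transpose_transpose, add_neg_cancel, neg_add_cancel, diagonal_add, diagonal_add,
    fromBlocks_diagonal, two_nsmul, ← Sum.elim_add_add]
  rfl

theorem hasDerivAt_exp_smul_mulVec (J : Matrix ι ι ℝ) (x₀ : ι → ℝ) (s : ℝ) :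
    HasDerivAt (fun s : ℝ => NormedSpace.exp (s • J) *ᵥ x₀)
      (J *ᵥ (NormedSpace.exp (s • J) *ᵥ x₀)) s := by
  -- `NormedSpace.exp` does not depend on the norm, so any normed algebra structure will do.
  let _ := Matrix.linftyOpNormedRing (n := ι) (α := ℝ)
  let _ := Matrix.linftyOpNormedAlgebra (n := ι) (R := ℝ) (α := ℝ)
  let evalAt : Matrix ι ι ℝ →L[ℝ] ι → ℝ :=
    (LinearMap.applyₗ x₀ ∘ₗ (toLin' : Matrix ι ι ℝ ≃ₗ[ℝ] _).toLinearMap).toContinuousLinearMap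
  rw [mulVec_mulVec]
  exact evalAt.hasFDerivAt.comp_hasDerivAt s (hasDerivAt_exp_smul_const' J s)

theorem re_lt_zero_of_mem_spectrum_of_lyapunov {A P Q : Matrix ι ι ℂ}
    (hP : P.PosDef) (hQ : Q.PosDef) (hA : Aᴴ * P + P * A = -Q) {μ : ℂ}
    (hμ : μ ∈ spectrum ℂ A) : μ.re < 0 := by
  rw [← spectrum_toLin', ← Module.End.hasEigenvalue_iff_mem_spectrum] at hμ
  obtain ⟨z, hz⟩ := hμ.exists_hasEigenvector
  have hAz : A *ᵥ z = μ • z := by simpa using hz.apply_eq_smul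
  obtain ⟨hPz, -⟩ := Complex.pos_iff.mp (hP.dotProduct_mulVec_pos hz.2)
  obtain ⟨hQz, -⟩ := Complex.pos_iff.mp (hQ.dotProduct_mulVec_pos hz.2)
  have hforms : (starRingEnd ℂ μ + μ) * (star z ⬝ᵥ P *ᵥ z) = -(star z ⬝ᵥ Q *ᵥ z) := by
    rw [← dotProduct_neg, ← neg_mulVec, ← hA, add_mulVec, ← mulVec_mulVec, ← mulVec_mulVec,
      dotProduct_add, dotProduct_mulVec (star z) Aᴴ, ← star_mulVec, hAz, mulVec_smul, star_smul,
      smul_dotProduct, dotProduct_smul, add_mul]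
    rfl
  have hre := congrArg Complex.re hforms
  rw [add_comm, Complex.add_conj, Complex.re_ofReal_mul, Complex.neg_re] at hre
  nlinarith

section DiagonalLyapunov

variable {d c : ι → ℝ} {J : Matrix ι ι ℝ}

theorem re_lt_zero_of_mem_spectrum_map_of_lyapunov (hd : ∀ i, 0 < d i) (hc : ∀ i, 0 < c i)
    (hJ : Jᵀ * diagonal d + diagonal d * J = -diagonal c) {μ : ℂ}
    (hμ : μ ∈ spectrum ℂ (J.map (algebraMap ℝ ℂ))) : μ.re < 0 := by
  have hposDef {w : ι → ℝ} (hw : ∀ i, 0 < w i) : ((diagonal w).map (algebraMap ℝ ℂ)).PosDef := by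
    rw [diagonal_map (map_zero _)]
    exact PosDef.diagonal fun i => by simpa using hw i
  refine re_lt_zero_of_mem_spectrum_of_lyapunov (hposDef hd) (hposDef hc) ?_ hμ
  have hJH : (J.map (algebraMap ℝ ℂ))ᴴ = Jᵀ.map (algebraMap ℝ ℂ) := by ext; simp
  rw [hJH, ← Matrix.map_mul, ← Matrix.map_mul, ← Matrix.map_add _ (map_add _), hJ,
    Matrix.map_neg _ (map_neg _)]

theorem sum_mul_two_mul_mulVec_of_lyapunov (hJ : Jᵀ * diagonal d + diagonal d * J = -diagonal c)
    (x : ι → ℝ) : ∑ i, d i * (2 * x i * (J *ᵥ x) i) = -∑ i, c i * x i ^ 2 := by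
  have h := congrArg (fun B => x ⬝ᵥ B *ᵥ x) hJ
  simp only [add_mulVec, ← mulVec_mulVec, dotProduct_add, neg_mulVec, dotProduct_neg] at h
  rw [dotProduct_mulVec x Jᵀ, vecMul_transpose] at h
  simp only [dotProduct, mulVec_diagonal, ← Finset.sum_add_distrib] at h
  refine (Finset.sum_congr rfl fun i _ => by ring).trans (h.trans ?_)
  exact congrArg Neg.neg (Finset.sum_congr rfl fun i _ => by ring)

theorem tendsto_exp_smul_mulVec_of_lyapunov (hd : ∀ i, 0 < d i) (hc : ∀ i, 0 < c i)
    (hJ : Jᵀ * diagonal d + diagonal d * J = -diagonal c) (x₀ : ι → ℝ) :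
    Tendsto (fun s : ℝ => NormedSpace.exp (s • J) *ᵥ x₀) atTop (𝓝 0) := by
  set x := fun s : ℝ => NormedSpace.exp (s • J) *ᵥ x₀
  set V := fun s => ∑ i, d i * x s i ^ 2
  obtain ⟨k, hk, hkdc⟩ := exists_pos_forall_mul_le (d := d) hc
  have hV : ∀ s, HasDerivAt V (-∑ i, c i * x s i ^ 2) s := fun s => by
    rw [← sum_mul_two_mul_mulVec_of_lyapunov hJ]
    refine HasDerivAt.fun_sum fun i _ => ?_
    have hxi : HasDerivAt (fun s => x s i) ((J *ᵥ x s) i) s :=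
      hasDerivAt_pi.1 (hasDerivAt_exp_smul_mulVec J x₀ s) i
    exact ((hxi.fun_pow 2).const_mul (d i)).congr_deriv (by ring)
  have hV' : ∀ s, -∑ i, c i * x s i ^ 2 ≤ -k * V s := fun s => by
    rw [neg_mul, neg_le_neg_iff, Finset.mul_sum]
    refine Finset.sum_le_sum fun i _ => ?_
    rw [← mul_assoc]
    exact mul_le_mul_of_nonneg_right (hkdc i) (sq_nonneg _)
  have hV_nonneg : ∀ s, 0 ≤ V s := fun s =>
    Finset.sum_nonneg fun i _ => mul_nonneg (hd i).le (sq_nonneg _)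
  have hV_tendsto : Tendsto V atTop (𝓝 0) := by
    refine squeeze_zero' (.of_forall hV_nonneg)
      (eventually_atTop.2 ⟨0, fun s => le_mul_exp_of_hasDerivAt_le_neg_mul hV hV'⟩) ?_
    simpa using (Real.tendsto_exp_comp_nhds_zero.2
      (tendsto_id.const_mul_atTop_of_neg (neg_neg_of_pos hk))).const_mul (V 0)
  refine tendsto_pi_nhds.2 fun i => tendsto_zero_iff_abs_tendsto_zero _ |>.2 ?_
  have hsq : Tendsto (fun s => x s i ^ 2) atTop (𝓝 0) := by
    refine squeeze_zero (fun s => sq_nonneg _) (fun s => ?_)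
      (by simpa using hV_tendsto.div_const (d i))
    rw [le_div_iff₀ (hd i), mul_comm]
    exact Finset.single_le_sum (fun j _ => mul_nonneg (hd j).le (sq_nonneg (x s j)))
      (Finset.mem_univ i)
  simpa [Function.comp_def, Real.sqrt_sq_eq_abs] using hsq.sqrt

end DiagonalLyapunov

end Matrix

/-- If all linearized conductances are positive, the linearized hvdc model ẋ = Jx with
J = -D⁻¹M is Hurwitz and the origin is asymptotically stable. -/
theorem hurwitz_of_positive_conductances {p v t : ℕ}
    (BP : Matrix (Fin p) (Fin t) ℝ) (BV : Matrix (Fin v) (Fin t) ℝ)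
    (dD : (Fin p ⊕ Fin v) ⊕ Fin t → ℝ) (hdD : ∀ i, 0 < dD i)
    (gP : Fin p → ℝ) (hgP : ∀ j, 0 < gP j)
    (gV : Fin v → ℝ) (hgV : ∀ k, 0 < gV k)
    (rT : Fin t → ℝ) (hrT : ∀ i, 0 < rT i)
    (M : Matrix ((Fin p ⊕ Fin v) ⊕ Fin t) ((Fin p ⊕ Fin v) ⊕ Fin t) ℝ)
    (hM : M = Matrix.fromBlocks
        (Matrix.fromBlocks (Matrix.diagonal gP) 0 0 (Matrix.diagonal gV))
        (Matrix.of (Sum.elim (fun a j => BP a j) (fun b j => BV b j)))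
        (-(Matrix.of (Sum.elim (fun a j => BP a j) (fun b j => BV b j))).transpose)
        (Matrix.diagonal rT))
    (J : Matrix ((Fin p ⊕ Fin v) ⊕ Fin t) ((Fin p ⊕ Fin v) ⊕ Fin t) ℝ)
    (hJ : J = -((Matrix.diagonal dD)⁻¹ * M)) :
    (∀ μ : ℂ, μ ∈ spectrum ℂ (J.map (algebraMap ℝ ℂ)) → μ.re < 0) ∧
    ∀ x0 : (Fin p ⊕ Fin v) ⊕ Fin t → ℝ,
      Tendsto (fun s : ℝ => (NormedSpace.exp (s • J)).mulVec x0) atTop (nhds 0) := by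
  set c := 2 • ((gP ⊕ᵥ gV) ⊕ᵥ rT)
  have hc : ∀ i, 0 < c i := by
    rintro ((j | k) | i) <;> simp [c, hgP, hgV, hrT]
  have hDJ : diagonal dD * J = -M := by
    rw [hJ, mul_neg, mul_nonsing_inv_cancel_left]
    exact (isUnit_iff_isUnit_det _).1 (PosDef.diagonal hdD).isUnit
  have hsymm : M + Mᵀ = diagonal c := by
    rw [hM, fromBlocks_diagonal, fromBlocks_diagonal_neg_transpose_add_transpose]
  have hLyap : Jᵀ * diagonal dD + diagonal dD * J = -diagonal c := by
    rw [← diagonal_transpose dD, ← transpose_mul, diagonal_transpose, hDJ, transpose_neg, ← neg_add,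
      add_comm, hsymm]
  exact ⟨fun μ => re_lt_zero_of_mem_spectrum_map_of_lyapunov hdD hc hLyap,
    tendsto_exp_smul_mulVec_of_lyapunov hdD hc hLyap⟩
end
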